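/- For all integers i ≥ 1 and 1 ≤ j ≤ i + 1, the cap product ζⱼ^{2^{i+1−j}} ∩ Sq^{2^i} equals ζ_{j−1}^{2^{i+1−j}} in A; that is, the left coefficient of the right-factor monomial ξ₁^{2^i} in Δ(ζⱼ^{2^{i+1−j}}) is ζ_{j−1}^{2^{i+1−j}}. -/

import Mathlib

/-!
STATEMENT 5: For all `i ≥ 1` and `1 ≤ j ≤ i + 1`, the cap product
`ζⱼ^{2^{i+1−j}} ∩ Sq^{2^i} = ζ_{j−1}^{2^{i+1−j}}` in the dual Steenrod algebra `A`.

Here `A = MvPolynomial ℕ (ZMod 2)` with `X i = ξ_{i+1}` (`ξ₀ = 1`), `Δ` is the Milnor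
coproduct, the conjugates satisfy `ζ₀ = 1`, `ζₙ = Σ_{j<n} ξ_{n−j}^{2^j}·ζⱼ`, and the cap
product `p ∩ Sq^k` is the coefficient of the monomial `ξ₁^k` in the right tensor factor of
`Δ p` (implemented as `(id ⊗ coeff_{ξ₁^k})` followed by `A ⊗ 𝔽₂ ≃ A`).
-/

open MvPolynomial TensorProduct

noncomputable section

abbrev A5 := MvPolynomial ℕ (ZMod 2)

/-- `xiA 0 = 1` (the convention `ξ₀ = 1`) and `xiA (i+1)` is the variable `ξ_{i+1}`. -/
def xiA : ℕ → A5
  | 0 => 1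
  | i + 1 => X i

/-- The cap product `p ∩ Sq^k`: the coefficient of the basis monomial `ξ₁ᵏ`
(exponent function `Finsupp.single 0 k`) in the right tensor factor of `Δ p`. -/
def capSq (Δ : A5 →ₐ[ZMod 2] A5 ⊗[ZMod 2] A5) (k : ℕ) (p : A5) : A5 :=
  TensorProduct.rid (ZMod 2) A5
    (LinearMap.lTensor A5 (MvPolynomial.lcoeff (ZMod 2) (Finsupp.single 0 k)) (Δ p))


/-!
Send the right tensor factor to a polynomial ring by `ξ₁ ↦ X` and `ξₙ ↦ 0` for `n ≥ 2`. This
turns `Δ p` into a polynomial `θ p` in `X` over `A` whose coefficient of `X^k` is `p ∩ Sq^k`.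
The map `θ` is multiplicative with `θ ξ_{n+1} = ξ_{n+1} + ξ_n² X`, and the recursion for the `ζₙ`
gives, by induction and telescoping in characteristic two, `θ ζₙ = Σ_{a ≤ n} ζ_a X^{2ⁿ - 2ᵃ}`.
Its coefficient of `X^{2^{n-1}}` is `ζ_{n-1}`, and raising to a `2^m`-th power is additive in
characteristic two, so the coefficient of `X^{2^{n-1} 2^m}` in `θ (ζₙ^{2^m})` is `ζ_{n-1}^{2^m}`.
-/

section CapPoly

variable {R σ : Type*} [CommSemiring R] [DecidableEq σ]

def univariatePart (S : Type*) [CommSemiring S] [Algebra R S] (i : σ) :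
    MvPolynomial σ R →ₐ[R] Polynomial S :=
  aeval fun n => if n = i then Polynomial.X else 0

theorem prod_ite_X_pow {S : Type*} [CommSemiring S] (i : σ) (d : σ →₀ ℕ) :
    (d.prod fun n e => (if n = i then (Polynomial.X : Polynomial S) else 0) ^ e)
      = if d = Finsupp.single i (d i) then Polynomial.X ^ d i else 0 := by
  split_ifs with hd
  · rw [hd, Finsupp.prod_single_index (by rw [pow_zero]), if_pos rfl, Finsupp.single_eq_same]
  · obtain ⟨n, hni, hn⟩ : ∃ n, n ≠ i ∧ d n ≠ 0 := by
      by_contra! h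
      exact hd (Finsupp.ext fun n => by
        rcases eq_or_ne n i with rfl | hni
        · rw [Finsupp.single_eq_same]
        · rw [Finsupp.single_eq_of_ne hni, h n hni])
    exact Finset.prod_eq_zero (Finsupp.mem_support_iff.mpr hn) (by simp [hni, hn])

theorem coeff_univariatePart (S : Type*) [CommSemiring S] [Algebra R S] (i : σ)
    (p : MvPolynomial σ R) (k : ℕ) :
    (univariatePart S i p).coeff k = algebraMap R S (p.coeff (Finsupp.single i k)) := by
  induction p using MvPolynomial.induction_on' with
  | monomial d c =>
    rw [univariatePart, aeval_monomial, prod_ite_X_pow, coeff_monomial]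
    by_cases hd : ∃ e, d = Finsupp.single i e
    · obtain ⟨e, rfl⟩ := hd
      rw [Finsupp.single_eq_same, if_pos rfl, Polynomial.algebraMap_apply,
        Polynomial.coeff_C_mul_X_pow, apply_ite (algebraMap R S), map_zero]
      simp only [(Finsupp.single_injective i).eq_iff, eq_comm]
    · have hd' : ¬d = Finsupp.single i (d i) := fun h => hd ⟨_, h⟩
      have hk : ¬d = Finsupp.single i k := fun h => hd ⟨_, h⟩
      rw [if_neg hd', if_neg hk, mul_zero, Polynomial.coeff_zero, map_zero]
  | add p q hp hq => simp only [map_add, Polynomial.coeff_add, coeff_add, hp, hq]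

def capPoly (R A : Type*) [CommSemiring R] [CommSemiring A] [Algebra R A] (i : σ) :
    A ⊗[R] MvPolynomial σ R →ₐ[R] Polynomial A :=
  Algebra.TensorProduct.productMap (IsScalarTower.toAlgHom R A (Polynomial A))
    (univariatePart A i)

variable {A : Type*} [CommSemiring A] [Algebra R A]

theorem capPoly_tmul (i : σ) (a : A) (b : MvPolynomial σ R) :
    capPoly R A i (a ⊗ₜ b) = Polynomial.C a * univariatePart A i b :=
  rfl

theorem coeff_capPoly (i : σ) (k : ℕ) (z : A ⊗[R] MvPolynomial σ R) :
    (capPoly R A i z).coeff k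
      = TensorProduct.rid R A (LinearMap.lTensor A (lcoeff R (Finsupp.single i k)) z) := by
  induction z using TensorProduct.induction_on with
  | zero => simp only [map_zero, Polynomial.coeff_zero]
  | tmul a b =>
    rw [capPoly_tmul, Polynomial.coeff_C_mul, coeff_univariatePart, LinearMap.lTensor_tmul,
      TensorProduct.rid_tmul, lcoeff_apply, Algebra.smul_def, mul_comm]
  | add x y hx hy => simp only [map_add, Polynomial.coeff_add, hx, hy]

end CapPoly

theorem CharTwo.sum_range_add_succ {R : Type*} [CommRing R] [CharP R 2] (f : ℕ → R) (n : ℕ) :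
    ∑ j ∈ Finset.range n, (f j + f (j + 1)) = f 0 + f n := by
  simpa only [CharTwo.sub_eq_add, add_comm] using Finset.sum_range_sub f n

theorem Polynomial.coeff_pow_expChar_pow_mul {R : Type*} [CommSemiring R] (p : ℕ) [ExpChar R p]
    (f : Polynomial R) (n k : ℕ) : (f ^ p ^ n).coeff (k * p ^ n) = f.coeff k ^ p ^ n := by
  rw [← map_iterateFrobenius_expand, coeff_map, coeff_expand_mul (expChar_pow_pos R p n)]
  rfl

theorem Nat.two_pow_succ_sub_two_pow_eq_iff {a n : ℕ} (ha : a ≤ n + 1) :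
    2 ^ (n + 1) - 2 ^ a = 2 ^ n ↔ a = n := by
  have hle : 2 ^ a ≤ 2 ^ (n + 1) := Nat.pow_le_pow_right two_pos ha
  rw [pow_succ] at hle ⊢
  constructor
  · intro h
    exact Nat.pow_right_injective le_rfl (show 2 ^ a = 2 ^ n by omega)
  · rintro rfl
    omega

section Coproduct

variable (zeta : ℕ → A5) (Δ : A5 →ₐ[ZMod 2] A5 ⊗[ZMod 2] A5)

theorem xiA_zero : xiA 0 = 1 := rfl

theorem capPoly_Δ_xiA
    (hΔ : ∀ n : ℕ, Δ (xiA (n + 1)) =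
      ∑ i ∈ Finset.range (n + 2), (xiA (n + 1 - i) ^ 2 ^ i) ⊗ₜ[ZMod 2] xiA i) (n : ℕ) :
    capPoly (ZMod 2) A5 0 (Δ (xiA (n + 1)))
      = Polynomial.C (xiA (n + 1)) + Polynomial.C (xiA n ^ 2) * Polynomial.X := by
  have h0 : univariatePart A5 0 (xiA 0) = 1 := map_one _
  have h1 : univariatePart A5 0 (xiA 1) = Polynomial.X := by simp [xiA, univariatePart]
  have h2 : ∀ i, univariatePart A5 0 (xiA (i + 2)) = 0 := by simp [xiA, univariatePart]
  rw [hΔ, map_sum, Finset.sum_range_succ', Finset.sum_range_succ']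
  simp only [capPoly_tmul, h0, h1, h2, mul_zero, Finset.sum_const_zero, zero_add,
    Nat.add_sub_cancel, Nat.sub_zero, pow_zero, pow_one, mul_one]
  exact add_comm _ _

def zetaPoly (n : ℕ) : Polynomial A5 :=
  ∑ a ∈ Finset.range (n + 1), Polynomial.C (zeta a) * Polynomial.X ^ (2 ^ n - 2 ^ a)

theorem zetaPoly_zero : zetaPoly zeta 0 = Polynomial.C (zeta 0) := by
  simp [zetaPoly]

theorem zetaPoly_succ (j : ℕ) :
    zetaPoly zeta (j + 1)
      = Polynomial.X ^ 2 ^ j * zetaPoly zeta j + Polynomial.C (zeta (j + 1)) := by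
  rw [zetaPoly, zetaPoly, Finset.sum_range_succ, Nat.sub_self, pow_zero, mul_one, Finset.mul_sum]
  refine congrArg (· + _) (Finset.sum_congr rfl fun a ha => ?_)
  have hle : 2 ^ a ≤ 2 ^ j := Nat.pow_le_pow_right two_pos (Finset.mem_range_succ_iff.mp ha)
  rw [mul_left_comm, ← pow_add, pow_succ]
  congr 2
  omega

theorem coeff_zetaPoly_succ (n : ℕ) : (zetaPoly zeta (n + 1)).coeff (2 ^ n) = zeta n := by
  rw [zetaPoly, Polynomial.finsetSum_coeff,
    Finset.sum_eq_single_of_mem n (Finset.mem_range.mpr (by omega))]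
  · rw [Polynomial.coeff_C_mul_X_pow,
      if_pos ((Nat.two_pow_succ_sub_two_pow_eq_iff n.le_succ).mpr rfl).symm]
  · intro a ha hne
    rw [Polynomial.coeff_C_mul_X_pow, if_neg fun h =>
      hne ((Nat.two_pow_succ_sub_two_pow_eq_iff (Finset.mem_range_succ_iff.mp ha)).mp h.symm)]

theorem sum_xiA_pow_mul_zeta_succ (hz0 : zeta 0 = 1)
    (hzS : ∀ n : ℕ, zeta (n + 1) =
      ∑ j ∈ Finset.range (n + 1), xiA (n + 1 - j) ^ 2 ^ j * zeta j) (m : ℕ) :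
    ∑ j ∈ Finset.range (m + 1), xiA (m - j) ^ 2 ^ (j + 1) * zeta (j + 1) = xiA (m + 1) := by
  have htel := CharTwo.sum_range_add_succ (fun j => xiA (m + 1 - j) ^ 2 ^ j * zeta j) (m + 1)
  simp only [Finset.sum_add_distrib, ← hzS, Nat.add_sub_add_right, Nat.sub_zero, Nat.sub_self,
    pow_zero, pow_one, xiA_zero, one_pow, one_mul, hz0, mul_one, add_comm (xiA _)] at htel
  exact add_left_cancel htel

theorem capPoly_Δ_zeta (hz0 : zeta 0 = 1)
    (hzS : ∀ n : ℕ, zeta (n + 1) =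
      ∑ j ∈ Finset.range (n + 1), xiA (n + 1 - j) ^ 2 ^ j * zeta j)
    (hΔ : ∀ n : ℕ, Δ (xiA (n + 1)) =
      ∑ i ∈ Finset.range (n + 2), (xiA (n + 1 - i) ^ 2 ^ i) ⊗ₜ[ZMod 2] xiA i) (n : ℕ) :
    capPoly (ZMod 2) A5 0 (Δ (zeta n)) = zetaPoly zeta n := by
  induction n using Nat.strong_induction_on with
  | _ n ih =>
    rcases n with _ | m
    · rw [hz0, map_one, map_one, zetaPoly_zero, hz0, map_one]
    set F : ℕ → Polynomial A5 := fun j => Polynomial.C (xiA (m + 1 - j) ^ 2 ^ j) * zetaPoly zeta j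
    have hterm : ∀ j ∈ Finset.range (m + 1),
        capPoly (ZMod 2) A5 0 (Δ (xiA (m + 1 - j) ^ 2 ^ j * zeta j))
          = F j + F (j + 1) + Polynomial.C (xiA (m - j) ^ 2 ^ (j + 1) * zeta (j + 1)) := by
      intro j hj
      have hjm : m + 1 - j = m - j + 1 := by have := Finset.mem_range_succ_iff.mp hj; omega
      have hX : Polynomial.X ^ 2 ^ j * zetaPoly zeta j
          = zetaPoly zeta (j + 1) + Polynomial.C (zeta (j + 1)) := by
        rw [zetaPoly_succ, add_assoc, CharTwo.add_self_eq_zero, add_zero]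
      rw [map_mul, map_mul, map_pow, map_pow, ih j (Finset.mem_range.mp hj), hjm,
        capPoly_Δ_xiA Δ hΔ, add_pow_char_pow, mul_pow, ← map_pow, ← map_pow, ← pow_mul,
        ← pow_succ', add_mul, mul_assoc, hX]
      simp only [F, Nat.add_sub_add_right, hjm, map_mul]
      ring
    rw [hzS, map_sum, map_sum, Finset.sum_congr rfl hterm, Finset.sum_add_distrib,
      CharTwo.sum_range_add_succ, ← map_sum, sum_xiA_pow_mul_zeta_succ zeta hz0 hzS]
    simp only [F, Nat.sub_zero, Nat.sub_self, pow_zero, pow_one, xiA_zero, one_pow, map_one,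
      one_mul, zetaPoly_zero, hz0, mul_one]
    rw [add_right_comm, CharTwo.add_self_eq_zero, zero_add]

end Coproduct

theorem stmt_5
    (zeta : ℕ → A5) (hz0 : zeta 0 = 1)
    (hzS : ∀ n : ℕ, zeta (n + 1) =
      ∑ j ∈ Finset.range (n + 1), xiA (n + 1 - j) ^ 2 ^ j * zeta j)
    (Δ : A5 →ₐ[ZMod 2] A5 ⊗[ZMod 2] A5)
    (hΔ : ∀ n : ℕ, Δ (xiA (n + 1)) =
      ∑ i ∈ Finset.range (n + 2), (xiA (n + 1 - i) ^ 2 ^ i) ⊗ₜ[ZMod 2] xiA i) :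
    ∀ i j : ℕ, 1 ≤ i → 1 ≤ j → j ≤ i + 1 →
      capSq Δ (2 ^ i) (zeta j ^ 2 ^ (i + 1 - j)) = zeta (j - 1) ^ 2 ^ (i + 1 - j) := by
  intro i j _ hj hji
  obtain ⟨n, rfl⟩ : ∃ n, j = n + 1 := ⟨j - 1, by omega⟩
  obtain ⟨m, rfl⟩ : ∃ m, i = n + m := ⟨i - n, by omega⟩
  rw [show n + m + 1 - (n + 1) = m by omega, Nat.add_sub_cancel, capSq, ← coeff_capPoly, map_pow,
    map_pow, capPoly_Δ_zeta zeta Δ hz0 hzS hΔ, pow_add, Polynomial.coeff_pow_expChar_pow_mul,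
    coeff_zetaPoly_succ]

end
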